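/- Let G be a connected simple graph on N ≥ 3 vertices in which every vertex has degree at most d, let v be any vertex, and let L̄ be the grounded Laplacian obtained by deleting the row and column of v from the Laplacian L, with eigenvalues λ̄₁ ≤ … ≤ λ̄_{N−1}. Then the grounded eigenratio satisfies λ̄₁/λ̄_{N−1} ≤ d/(N − 1); in particular, for any sequence of such graphs with fixed degree bound d, the grounded eigenratio tends to 0 as N → ∞. -/

import Mathlib

open Matrix

/-- The `k`-th smallest eigenvalue (0-indexed, counted with multiplicity) of a
real Hermitian (symmetric) matrix; junk value `0` if `M` is not Hermitian or
`k` is out of range. -/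
noncomputable def eigVal {n : Type*} [Fintype n] [DecidableEq n]
    (M : Matrix n n ℝ) (k : ℕ) : ℝ := by
  classical
  exact if h : M.IsHermitian ∧ k < Fintype.card n then
    (h.1.eigenvalues₀ ∘ Tuple.sort h.1.eigenvalues₀) ⟨k, h.2⟩
  else 0

/-- The grounded matrix obtained from `M` by deleting the row and the column
indexed by the vertex `v`. -/
def ground {N : ℕ} (M : Matrix (Fin N) (Fin N) ℝ) (v : Fin N) :
    Matrix {i : Fin N // i ≠ v} {i : Fin N // i ≠ v} ℝ :=
  M.submatrix (fun i => i.1) (fun i => i.1)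

/-- The (real) Laplacian matrix of a simple graph. -/
noncomputable def lap {N : ℕ} (G : SimpleGraph (Fin N)) : Matrix (Fin N) (Fin N) ℝ := by
  classical
  exact G.lapMatrix ℝ

/-- The degree of the vertex `v` in `G`. -/
noncomputable def deg {N : ℕ} (G : SimpleGraph (Fin N)) (v : Fin N) : ℕ := by
  classical
  exact (Finset.univ.filter fun u => G.Adj v u).card

/-- The Cheeger (isoperimetric) constant of a graph: the infimum of
`|∂X|/|X|` over nonempty vertex sets `X` with `|X| ≤ N/2`, where `∂X` is the
set of edges with exactly one endpoint in `X`. -/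
noncomputable def cheeger {N : ℕ} (G : SimpleGraph (Fin N)) : ℝ := by
  classical
  exact sInf {r : ℝ | ∃ X : Finset (Fin N), X.Nonempty ∧ (X.card : ℝ) ≤ (N : ℝ) / 2 ∧
    r = ((Finset.univ.filter fun p : Fin N × Fin N =>
      G.Adj p.1 p.2 ∧ p.1 ∈ X ∧ p.2 ∉ X).card : ℝ) / X.card}

section AuxEig

variable {n : Type*} [Fintype n] [DecidableEq n] {M : Matrix n n ℝ}

lemma eigVal_eq' (hM : M.IsHermitian) {k : ℕ} (hk : k < Fintype.card n) :
    eigVal M k = (hM.eigenvalues₀ ∘ Tuple.sort hM.eigenvalues₀) ⟨k, hk⟩ := by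
  unfold eigVal
  rw [dif_pos ⟨hM, hk⟩]

lemma eigenvalues₀_eq' (hM : M.IsHermitian) (j : Fin (Fintype.card n)) :
    hM.eigenvalues₀ j = hM.eigenvalues ((Fintype.equivOfCardEq (Fintype.card_fin _)) j) := by
  rw [Matrix.IsHermitian.eigenvalues, Equiv.symm_apply_apply]

lemma eigVal_zero_le' (hM : M.IsHermitian) (h0 : 0 < Fintype.card n) (i : n) :
    eigVal M 0 ≤ hM.eigenvalues i := by
  rw [eigVal_eq' hM h0]
  have h1 : hM.eigenvalues i = (hM.eigenvalues₀ ∘ Tuple.sort hM.eigenvalues₀)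
      ((Tuple.sort hM.eigenvalues₀)⁻¹
        ((Fintype.equivOfCardEq (Fintype.card_fin _)).symm i)) := by
    rw [Matrix.IsHermitian.eigenvalues, Function.comp_apply, ← Equiv.Perm.mul_apply, mul_inv_cancel, Equiv.Perm.one_apply]
  rw [h1]
  exact Tuple.monotone_sort _ (by simp [Fin.le_def])

lemma eigenvalues_le_eigVal' (hM : M.IsHermitian) {k : ℕ} (hk : Fintype.card n = k + 1) (i : n) :
    hM.eigenvalues i ≤ eigVal M k := by
  rw [eigVal_eq' hM (by omega)]
  have h1 : hM.eigenvalues i = (hM.eigenvalues₀ ∘ Tuple.sort hM.eigenvalues₀)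
      ((Tuple.sort hM.eigenvalues₀)⁻¹
        ((Fintype.equivOfCardEq (Fintype.card_fin _)).symm i)) := by
    rw [Matrix.IsHermitian.eigenvalues, Function.comp_apply, ← Equiv.Perm.mul_apply, mul_inv_cancel, Equiv.Perm.one_apply]
  rw [h1]
  refine Tuple.monotone_sort _ ?_
  have := ((Tuple.sort hM.eigenvalues₀)⁻¹
        ((Fintype.equivOfCardEq (Fintype.card_fin _)).symm i)).isLt
  simp only [Fin.le_def]
  omega

lemma eigVal_nonneg' (hM : M.PosSemidef) (k : ℕ) : 0 ≤ eigVal M k := by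
  by_cases hk : k < Fintype.card n
  · rw [eigVal_eq' hM.1 hk, Function.comp_apply, eigenvalues₀_eq']
    exact hM.eigenvalues_nonneg _
  · unfold eigVal
    rw [dif_neg (by tauto)]

lemma rayleigh' (hM : M.IsHermitian) (x : n → ℝ) :
    ∃ y : n → ℝ, x ⬝ᵥ (M *ᵥ x) = ∑ i, hM.eigenvalues i * (y i)^2 ∧
      x ⬝ᵥ x = ∑ i, (y i)^2 := by
  set U : Matrix n n ℝ := (hM.eigenvectorUnitary : Matrix n n ℝ) with hU
  have hstar : star U = Uᵀ := by
    rw [Matrix.star_eq_conjTranspose, Matrix.conjTranspose_eq_transpose_of_trivial]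
  set y : n → ℝ := Uᵀ *ᵥ x with hy
  have hkey : ∀ w : n → ℝ, x ⬝ᵥ (U *ᵥ w) = y ⬝ᵥ w := by
    intro w
    rw [dotProduct_mulVec, hy, mulVec_transpose]
  have hUU : U * Uᵀ = 1 := by
    rw [← hstar]
    exact (Matrix.mem_unitaryGroup_iff).mp hM.eigenvectorUnitary.2
  refine ⟨y, ?_, ?_⟩
  · have hspec : M *ᵥ x = U *ᵥ ((Matrix.diagonal (RCLike.ofReal ∘ hM.eigenvalues)) *ᵥ y) := by
      conv_lhs => rw [hM.spectral_theorem, Unitary.conjStarAlgAut_apply]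
      rw [← hU, hstar, ← mulVec_mulVec, ← mulVec_mulVec, ← hy]
    rw [hspec, hkey]
    rw [dotProduct, Finset.sum_congr rfl]
    intro i _
    rw [mulVec_diagonal]
    simp [RCLike.ofReal_real_eq_id]
    ring
  · have : x ⬝ᵥ x = x ⬝ᵥ ((U * Uᵀ) *ᵥ x) := by rw [hUU, one_mulVec]
    rw [this, ← mulVec_mulVec, hkey, ← hy, dotProduct, Finset.sum_congr rfl]
    intro i _
    rw [sq]

end AuxEig

section AuxGraph

variable {N : ℕ} (G : SimpleGraph (Fin N)) [DecidableRel G.Adj] (v : Fin N)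

lemma card_ne' (v : Fin N) : Fintype.card {i : Fin N // i ≠ v} = N - 1 := by
  simp [Fintype.card_subtype_compl]

lemma sum_subtype_ne' (f : Fin N → ℝ) :
    ∑ i : {i : Fin N // i ≠ v}, f i.1 = ∑ i ∈ Finset.univ.erase v, f i := by
  rw [Finset.sum_subtype (p := fun i => i ≠ v) (Finset.univ.erase v) (fun x => by simp) f]

lemma row_sum_lap' (i : Fin N) : ∑ j, G.lapMatrix ℝ i j = 0 := by
  have := congrFun (G.lapMatrix_mulVec_const_eq_zero (R := ℝ)) i
  simpa [mulVec, dotProduct] using this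

lemma lap_diag' (i : Fin N) : G.lapMatrix ℝ i i = G.degree i := by
  simp [SimpleGraph.lapMatrix, SimpleGraph.degMatrix]

lemma ones_quad' :
    (fun _ : {i : Fin N // i ≠ v} => (1 : ℝ)) ⬝ᵥ
      (ground (G.lapMatrix ℝ) v *ᵥ fun _ => (1 : ℝ)) = G.degree v := by
  have hrow : ∀ i : Fin N, ∑ j ∈ Finset.univ.erase v, G.lapMatrix ℝ i j
      = - G.lapMatrix ℝ i v := by
    intro i
    have h := row_sum_lap' G i
    have := Finset.add_sum_erase Finset.univ (fun j => G.lapMatrix ℝ i j) (Finset.mem_univ v)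
    linarith
  have hcol : ∑ i ∈ Finset.univ.erase v, G.lapMatrix ℝ i v = - G.lapMatrix ℝ v v := by
    have h : ∑ i, G.lapMatrix ℝ i v = 0 := by
      have := row_sum_lap' G v
      rw [← this]
      exact Finset.sum_congr rfl fun j _ => congrFun (congrFun (G.isSymm_lapMatrix ℝ).eq j) v |>.symm
        |>.trans (by rw [Matrix.transpose_apply])
    have := Finset.add_sum_erase Finset.univ (fun i => G.lapMatrix ℝ i v) (Finset.mem_univ v)
    linarith
  calc (fun _ : {i : Fin N // i ≠ v} => (1 : ℝ)) ⬝ᵥ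
      (ground (G.lapMatrix ℝ) v *ᵥ fun _ => (1 : ℝ))
      = ∑ i : {i : Fin N // i ≠ v}, ∑ j : {i : Fin N // i ≠ v}, G.lapMatrix ℝ i.1 j.1 := by
        simp [dotProduct, mulVec, ground, Matrix.submatrix]
    _ = ∑ i : {i : Fin N // i ≠ v}, ∑ j ∈ Finset.univ.erase v, G.lapMatrix ℝ i.1 j := by
        exact Finset.sum_congr rfl fun i _ => sum_subtype_ne' v _
    _ = ∑ i : {i : Fin N // i ≠ v}, - G.lapMatrix ℝ i.1 v := by
        exact Finset.sum_congr rfl fun i _ => hrow i.1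
    _ = ∑ i ∈ Finset.univ.erase v, - G.lapMatrix ℝ i v :=
        sum_subtype_ne' v (fun i => - G.lapMatrix ℝ i v)
    _ = G.lapMatrix ℝ v v := by rw [Finset.sum_neg_distrib, hcol, neg_neg]
    _ = G.degree v := lap_diag' G v

lemma single_quad' (u : {i : Fin N // i ≠ v}) :
    (Pi.single u (1:ℝ)) ⬝ᵥ (ground (G.lapMatrix ℝ) v *ᵥ Pi.single u (1:ℝ))
      = G.degree u.1 := by
  rw [mulVec_single]
  simp [single_dotProduct, ground, lap_diag']

lemma ones_dot' :
    (fun _ : {i : Fin N // i ≠ v} => (1 : ℝ)) ⬝ᵥ (fun _ => (1 : ℝ)) = (N : ℝ) - 1 := by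
  have h := card_ne' v
  have : (0:ℕ) < N := v.pos
  simp [dotProduct, h]
  push_cast [Nat.cast_sub this]
  ring

lemma single_dot' (u : {i : Fin N // i ≠ v}) :
    (Pi.single u (1:ℝ)) ⬝ᵥ (Pi.single u (1:ℝ)) = 1 := by
  simp [dotProduct, Pi.single_apply]

lemma degree_pos' (hc : G.Connected) (hN : 2 ≤ N) (u : Fin N) : 0 < G.degree u := by
  rw [G.degree_pos_iff_exists_adj u]
  obtain ⟨w, hw⟩ := Fintype.exists_ne_of_one_lt_card (by simp; omega) u
  obtain ⟨p⟩ := hc.preconnected u w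
  cases p with
  | nil => exact absurd rfl hw
  | cons h _ => exact ⟨_, h⟩

lemma lap_eq' : lap G = G.lapMatrix ℝ := by
  unfold lap
  congr!

lemma deg_eq' (u : Fin N) : deg G u = G.degree u := by
  unfold deg
  rw [SimpleGraph.degree, SimpleGraph.neighborFinset_eq_filter]
  congr!

end AuxGraph

lemma key_bounds {N : ℕ} (hN : 3 ≤ N) (G : SimpleGraph (Fin N)) (hc : G.Connected)
    (d : ℕ) (hd : ∀ u, deg G u ≤ d) (v : Fin N) :
    0 ≤ eigVal (ground (lap G) v) 0 / eigVal (ground (lap G) v) (N - 2) ∧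
    eigVal (ground (lap G) v) 0 / eigVal (ground (lap G) v) (N - 2) ≤
      (d : ℝ) / ((N : ℝ) - 1) := by
  classical
  rw [lap_eq' G]
  set M := ground (G.lapMatrix ℝ) v with hM
  have hPSD : M.PosSemidef := (SimpleGraph.posSemidef_lapMatrix ℝ G).submatrix _
  have hH : M.IsHermitian := hPSD.1
  have hcard : Fintype.card {i : Fin N // i ≠ v} = N - 1 := card_ne' v
  have hcard' : Fintype.card {i : Fin N // i ≠ v} = (N - 2) + 1 := by omega
  have hpos : 0 < Fintype.card {i : Fin N // i ≠ v} := by omega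
  have hN1 : (0 : ℝ) < (N : ℝ) - 1 := by
    have : (3 : ℝ) ≤ (N : ℝ) := by exact_mod_cast hN
    linarith
  have ha0 : 0 ≤ eigVal M 0 := eigVal_nonneg' hPSD 0
  have hb0 : 0 ≤ eigVal M (N - 2) := eigVal_nonneg' hPSD (N - 2)
  -- upper bound on smallest eigenvalue via all-ones vector
  have ha : eigVal M 0 ≤ (d : ℝ) / ((N : ℝ) - 1) := by
    obtain ⟨y, h1, h2⟩ := rayleigh' hH (fun _ => (1 : ℝ))
    have hle : eigVal M 0 * ((N : ℝ) - 1) ≤ (G.degree v : ℝ) := by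
      have := ones_quad' G v
      have hdot := ones_dot' (N := N) v
      calc eigVal M 0 * ((N : ℝ) - 1)
          = eigVal M 0 * ((fun _ : {i : Fin N // i ≠ v} => (1:ℝ)) ⬝ᵥ fun _ => (1:ℝ)) := by
            rw [hdot]
        _ = ∑ i, eigVal M 0 * (y i)^2 := by rw [h2, Finset.mul_sum]
        _ ≤ ∑ i, hH.eigenvalues i * (y i)^2 := by
            refine Finset.sum_le_sum fun i _ => ?_
            exact mul_le_mul_of_nonneg_right (eigVal_zero_le' hH hpos i) (sq_nonneg _)
        _ = (G.degree v : ℝ) := by rw [← h1, hM, ones_quad' G v]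
    have hdeg : (G.degree v : ℝ) ≤ (d : ℝ) := by
      have := hd v
      rw [deg_eq'] at this
      exact_mod_cast this
    rw [le_div_iff₀ hN1]
    linarith
  -- lower bound on largest eigenvalue via a standard basis vector
  have hb : 1 ≤ eigVal M (N - 2) := by
    obtain ⟨w, hw⟩ := Fintype.exists_ne_of_one_lt_card (by simp; omega) v
    set u : {i : Fin N // i ≠ v} := ⟨w, hw⟩
    obtain ⟨y, h1, h2⟩ := rayleigh' hH (Pi.single u (1 : ℝ))
    have hdegu : (1 : ℝ) ≤ (G.degree w : ℝ) := by
      have := degree_pos' G hc (by omega) w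
      exact_mod_cast this
    have hle : (G.degree w : ℝ) ≤ eigVal M (N - 2) * 1 := by
      calc (G.degree w : ℝ)
          = (Pi.single u (1:ℝ)) ⬝ᵥ (M *ᵥ Pi.single u (1:ℝ)) := (single_quad' G v u).symm
        _ = ∑ i, hH.eigenvalues i * (y i)^2 := h1
        _ ≤ ∑ i, eigVal M (N - 2) * (y i)^2 := by
            refine Finset.sum_le_sum fun i _ => ?_
            exact mul_le_mul_of_nonneg_right (eigenvalues_le_eigVal' hH hcard' i) (sq_nonneg _)
        _ = eigVal M (N - 2) * ((Pi.single u (1:ℝ)) ⬝ᵥ (Pi.single u (1:ℝ))) := by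
            rw [h2, Finset.mul_sum]
        _ = eigVal M (N - 2) * 1 := by rw [single_dot' v u]
    linarith
  refine ⟨div_nonneg ha0 hb0, ?_⟩
  calc eigVal M 0 / eigVal M (N - 2) ≤ eigVal M 0 := div_le_self ha0 hb
    _ ≤ (d : ℝ) / ((N : ℝ) - 1) := ha

/-- For a connected simple graph on `N ≥ 3` vertices with all
degrees at most `d`, the grounded eigenratio `λ̄₁/λ̄_{N-1}` (grounding any
vertex) is at most `d/(N-1)`; in particular, for any sequence of such graphs
with fixed degree bound `d` and sizes tending to infinity, the grounded
eigenratio tends to `0`. -/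
theorem grounded_eigenratio_le_and_tendsto_zero (d : ℕ) :
    (∀ N : ℕ, 3 ≤ N → ∀ G : SimpleGraph (Fin N), G.Connected → (∀ u, deg G u ≤ d) →
      ∀ v : Fin N,
        eigVal (ground (lap G) v) 0 / eigVal (ground (lap G) v) (N - 2) ≤
          (d : ℝ) / ((N : ℝ) - 1)) ∧
    (∀ Nsz : ℕ → ℕ, Filter.Tendsto Nsz Filter.atTop Filter.atTop →
      ∀ G : (k : ℕ) → SimpleGraph (Fin (Nsz k)),
        (∀ k, 3 ≤ Nsz k) → (∀ k, (G k).Connected) → (∀ k u, deg (G k) u ≤ d) →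
        ∀ v : (k : ℕ) → Fin (Nsz k),
          Filter.Tendsto
            (fun k => eigVal (ground (lap (G k)) (v k)) 0 /
              eigVal (ground (lap (G k)) (v k)) (Nsz k - 2))
            Filter.atTop (nhds 0)) := by
  
  constructor
  · intro N hN G hc hd v
    exact (key_bounds hN G hc d hd v).2
  · intro Nsz hNsz G hN hc hd v
    have hub : ∀ k, eigVal (ground (lap (G k)) (v k)) 0 /
        eigVal (ground (lap (G k)) (v k)) (Nsz k - 2) ≤ (d : ℝ) / ((Nsz k : ℝ) - 1) :=
      fun k => (key_bounds (hN k) (G k) (hc k) d (hd k) (v k)).2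
    have hlb : ∀ k, 0 ≤ eigVal (ground (lap (G k)) (v k)) 0 /
        eigVal (ground (lap (G k)) (v k)) (Nsz k - 2) :=
      fun k => (key_bounds (hN k) (G k) (hc k) d (hd k) (v k)).1
    have hden : Filter.Tendsto (fun k => (Nsz k : ℝ) - 1) Filter.atTop Filter.atTop := by
      have h1 : Filter.Tendsto (fun k => (Nsz k : ℝ)) Filter.atTop Filter.atTop :=
        Filter.Tendsto.comp tendsto_natCast_atTop_atTop hNsz
      simpa [sub_eq_add_neg] using Filter.tendsto_atTop_add_const_right Filter.atTop (-1) h1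
    have hg : Filter.Tendsto (fun k => (d : ℝ) / ((Nsz k : ℝ) - 1)) Filter.atTop (nhds 0) :=
      Filter.Tendsto.div_atTop tendsto_const_nhds hden
    exact squeeze_zero hlb hub hg
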